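/- (Keller–Osserman bound.) Let n ≥ 3. There is a constant C = C(n) > 0 such that for every open set O ⊊ ℝ^n and every C² function u : O → ℝ with u > 0 and Δu = u^{(n+2)/(n-2)} on O, one has u(x) ≤ C · dist(x, ℝ^n \ O)^{-(n-2)/2} for all x ∈ O. -/

import Mathlib

/-!
Comparison with an explicit barrier. On a ball `B(x, r)` the function
`v y = A (r² - ‖y - x‖²)^(-p)`, with `p = 2 / (q - 1) = (n - 2) / 2`, blows up on the sphere and
satisfies `Δv ≤ v^q` as soon as `A^(q-1) ≥ K r²`, `K = 4p(p+1) + 2np`. If `u > v` somewhere in the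
ball, then `u - v` attains a positive local maximum `x₀` inside it (`u` is bounded on the closed
ball while `v → ∞` at the sphere); there `Δu ≤ Δv`, contradicting `u(x₀)^q > v(x₀)^q`. Hence
`u x ≤ v x = K^(p/2) r^(-p)`, and `r = dist(x, Oᶜ) / 2` gives the bound.
-/

open Metric Set MeasureTheory Filter

noncomputable def lap {n : ℕ} (u : EuclideanSpace ℝ (Fin n) → ℝ) (x : EuclideanSpace ℝ (Fin n)) : ℝ :=
  ∑ i : Fin n, fderiv ℝ (fun y => fderiv ℝ u y (EuclideanSpace.single i 1)) x (EuclideanSpace.single i 1)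

open scoped Topology RealInnerProductSpace

theorem IsLocalMax.deriv_deriv_nonpos {g : ℝ → ℝ} {a : ℝ} (hmax : IsLocalMax g a)
    (hc : ContinuousAt g a) : deriv (deriv g) a ≤ 0 := by
  by_contra! hpos
  -- by the second derivative test `a` is also a local minimum, so `g` is locally constant
  have hmin : IsLocalMin g a := isLocalMin_of_deriv_deriv_pos hpos hmax.deriv_eq_zero hc
  have hconst : g =ᶠ[𝓝 a] fun _ => g a :=
    (hmin.and hmax).mono fun _ h => le_antisymm h.2 h.1
  have hderiv : deriv g =ᶠ[𝓝 a] fun _ => 0 :=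
    hconst.eventuallyEq_nhds.mono fun _ hy => by simp [hy.deriv_eq]
  simp [hderiv.deriv_eq] at hpos

section SecondDerivative
variable {E : Type*} [NormedAddCommGroup E] [NormedSpace ℝ E] {f : E → ℝ} {x : E}

theorem ContDiffAt.differentiableAt_fderiv_apply (hf : ContDiffAt ℝ 2 f x) (e : E) :
    DifferentiableAt ℝ (fun y => fderiv ℝ f y e) x :=
  ((hf.fderiv_right (m := 1) one_add_one_eq_two.le).differentiableAt one_ne_zero).clm_apply
    (differentiableAt_const e)

theorem IsLocalMax.fderiv_fderiv_apply_nonpos (hmax : IsLocalMax f x) (hf : ContDiffAt ℝ 2 f x)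
    (e : E) : fderiv ℝ (fun y => fderiv ℝ f y e) x e ≤ 0 := by
  set line : ℝ → E := fun t => x + t • e
  have hline : ∀ t, HasDerivAt line e t := fun t => by
    simpa [line] using ((hasDerivAt_id t).smul_const e).const_add x
  have hline0 : line 0 = x := by simp [line]
  have hdiff : ∀ᶠ t in 𝓝 0, DifferentiableAt ℝ f (line t) :=
    (hline0 ▸ (hline 0).continuousAt.tendsto).eventually
      ((hf.eventually (by simp)).mono fun _ hy => hy.differentiableAt two_ne_zero)
  have hfirst : deriv (f ∘ line) =ᶠ[𝓝 0] fun t => fderiv ℝ f (line t) e :=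
    hdiff.mono fun t ht => (ht.hasFDerivAt.comp_hasDerivAt t (hline t)).deriv
  have hsecond : HasDerivAt (fun t => fderiv ℝ f (line t) e)
      (fderiv ℝ (fun y => fderiv ℝ f y e) x e) 0 :=
    hline0 ▸ (hline0 ▸ hf.differentiableAt_fderiv_apply e).hasFDerivAt.comp_hasDerivAt 0 (hline 0)
  have hmax_line : IsLocalMax (f ∘ line) 0 :=
    (hline0 ▸ hmax).comp_continuous (hline 0).continuousAt
  have := hmax_line.deriv_deriv_nonpos (hf.continuousAt.comp_of_eq (hline 0).continuousAt hline0)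
  rwa [hfirst.deriv_eq, hsecond.deriv] at this

end SecondDerivative

theorem IsCompact.exists_isLocalMax_ge {X α : Type*} [TopologicalSpace X] [LinearOrder α]
    [TopologicalSpace α] [ClosedIciTopology α] {U K : Set X} {f : X → α} {x : X}
    (hU : IsOpen U) (hK : IsCompact K) (hKU : K ⊆ U) (hf : ContinuousOn f U) (hx : x ∈ K)
    (hsuper : ∀ y ∈ U, f x ≤ f y → y ∈ K) :
    ∃ x₀ ∈ K, IsLocalMax f x₀ ∧ f x ≤ f x₀ := by
  obtain ⟨x₀, hx₀, hmax⟩ := hK.exists_isMaxOn ⟨x, hx⟩ (hf.mono hKU)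
  refine ⟨x₀, hx₀, ?_, hmax hx⟩
  filter_upwards [hU.mem_nhds (hKU hx₀)] with y hy
  by_cases hxy : f x ≤ f y
  · exact hmax (hsuper y hy hxy)
  · exact (not_le.1 hxy).le.trans (hmax hx)

section Radial
variable {E : Type*} [NormedAddCommGroup E] [InnerProductSpace ℝ E]

theorem hasFDerivAt_norm_sub_sq (z y : E) :
    HasFDerivAt (fun y => ‖y - z‖ ^ 2) (2 • innerSL ℝ (y - z)) y := by
  simpa using ((hasFDerivAt_id y).sub_const z).norm_sq

theorem fderiv_fderiv_comp_norm_sub_sq {φ φ' : ℝ → ℝ} {φ'' : ℝ} {x z : E}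
    (hφ : ∀ᶠ t in 𝓝 (‖x - z‖ ^ 2), HasDerivAt φ (φ' t) t)
    (hφ' : HasDerivAt φ' φ'' (‖x - z‖ ^ 2)) (e : E) :
    fderiv ℝ (fun y => fderiv ℝ (fun y => φ (‖y - z‖ ^ 2)) y e) x e =
      4 * φ'' * ⟪x - z, e⟫ ^ 2 + 2 * φ' (‖x - z‖ ^ 2) * ‖e‖ ^ 2 := by
  have hcont : Continuous fun y : E => ‖y - z‖ ^ 2 := by fun_prop
  have hfirst : (fun y => fderiv ℝ (fun y => φ (‖y - z‖ ^ 2)) y e) =ᶠ[𝓝 x]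
      fun y => φ' (‖y - z‖ ^ 2) * (2 * ⟪y - z, e⟫) :=
    (hcont.continuousAt.eventually hφ).mono fun y hy => by
      have hy' : HasFDerivAt (fun y => φ (‖y - z‖ ^ 2)) _ y :=
        hy.comp_hasFDerivAt y (hasFDerivAt_norm_sub_sq z y)
      simp [hy'.fderiv, inner_sub_left]
  have hinner : HasFDerivAt (fun y => ⟪y - z, e⟫) (innerSL ℝ e) x := by
    simp_rw [real_inner_comm e]
    exact (innerSL ℝ e).hasFDerivAt.comp x ((hasFDerivAt_id x).sub_const z)
  have hsecond : HasFDerivAt (fun y => φ' (‖y - z‖ ^ 2) * (2 * ⟪y - z, e⟫)) _ x :=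
    (hφ'.comp_hasFDerivAt x (hasFDerivAt_norm_sub_sq z x)).mul (hinner.const_mul 2)
  rw [hfirst.fderiv_eq, hsecond.fderiv]
  simp [inner_sub_right, real_inner_comm e]
  ring

end Radial

section Laplacian
variable {n : ℕ}

theorem lap_sub {u v : EuclideanSpace ℝ (Fin n) → ℝ} {x : EuclideanSpace ℝ (Fin n)}
    (hu : ContDiffAt ℝ 2 u x) (hv : ContDiffAt ℝ 2 v x) : lap (u - v) x = lap u x - lap v x := by
  have hfderiv : fderiv ℝ (u - v) =ᶠ[𝓝 x] fderiv ℝ u - fderiv ℝ v :=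
    ((hu.eventually (by simp)).and (hv.eventually (by simp))).mono fun y hy =>
      fderiv_sub (hy.1.differentiableAt two_ne_zero) (hy.2.differentiableAt two_ne_zero)
  simp only [lap, ← Finset.sum_sub_distrib]
  refine Finset.sum_congr rfl fun i _ => ?_
  have hcongr : (fun y => fderiv ℝ (u - v) y (EuclideanSpace.single i 1)) =ᶠ[𝓝 x]
      fun y =>
        fderiv ℝ u y (EuclideanSpace.single i 1) - fderiv ℝ v y (EuclideanSpace.single i 1) :=
    hfderiv.mono fun y hy => by simp [hy]
  rw [hcongr.fderiv_eq, fderiv_fun_sub (hu.differentiableAt_fderiv_apply _)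
    (hv.differentiableAt_fderiv_apply _)]
  rfl

theorem IsLocalMax.lap_nonpos {u : EuclideanSpace ℝ (Fin n) → ℝ} {x : EuclideanSpace ℝ (Fin n)}
    (hmax : IsLocalMax u x) (hu : ContDiffAt ℝ 2 u x) : lap u x ≤ 0 :=
  Finset.sum_nonpos fun _ _ => hmax.fderiv_fderiv_apply_nonpos hu _

theorem le_of_rpow_le_lap_of_lap_le_rpow {U K : Set (EuclideanSpace ℝ (Fin n))}
    {u v : EuclideanSpace ℝ (Fin n) → ℝ} {q : ℝ} (hq : 0 < q) (hU : IsOpen U) (hK : IsCompact K)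
    (hKU : K ⊆ U) (hu : ContDiffOn ℝ 2 u U) (hv : ContDiffOn ℝ 2 v U) (hv₀ : ∀ y ∈ U, 0 ≤ v y)
    (hlapu : ∀ y ∈ U, u y ^ q ≤ lap u y) (hlapv : ∀ y ∈ U, lap v y ≤ v y ^ q)
    (hgt : ∀ y ∈ U, v y < u y → y ∈ K) {x : EuclideanSpace ℝ (Fin n)} (hx : x ∈ U) :
    u x ≤ v x := by
  by_contra! hvu
  obtain ⟨x₀, hx₀, hmax, hle⟩ := hK.exists_isLocalMax_ge hU hKU (f := u - v)
    (hu.continuousOn.sub hv.continuousOn) (hgt x hx hvu)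
    (fun y hy hle => hgt y hy (by simp only [Pi.sub_apply] at hle; linarith))
  have hx₀U := hKU hx₀
  have hux₀ := hu.contDiffAt (hU.mem_nhds hx₀U)
  have hvx₀ := hv.contDiffAt (hU.mem_nhds hx₀U)
  have hlap : lap u x₀ ≤ lap v x₀ := by
    have := hmax.lap_nonpos (hux₀.sub hvx₀)
    rw [lap_sub hux₀ hvx₀] at this
    linarith
  have hvu₀ : v x₀ < u x₀ := by simp only [Pi.sub_apply] at hle; linarith
  have := Real.rpow_lt_rpow (hv₀ x₀ hx₀U) hvu₀ hq
  linarith [hlapu x₀ hx₀U, hlapv x₀ hx₀U]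

theorem lap_comp_norm_sub_sq {φ φ' : ℝ → ℝ} {φ'' : ℝ} {x z : EuclideanSpace ℝ (Fin n)}
    (hφ : ∀ᶠ t in 𝓝 (‖x - z‖ ^ 2), HasDerivAt φ (φ' t) t)
    (hφ' : HasDerivAt φ' φ'' (‖x - z‖ ^ 2)) :
    lap (fun y => φ (‖y - z‖ ^ 2)) x = 4 * φ'' * ‖x - z‖ ^ 2 + 2 * n * φ' (‖x - z‖ ^ 2) := by
  simp only [lap, fderiv_fderiv_comp_norm_sub_sq hφ hφ', EuclideanSpace.inner_single_right]
  simp [Finset.sum_add_distrib, ← Finset.mul_sum, EuclideanSpace.norm_sq_eq (x - z)]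
  ring

end Laplacian

theorem hasDerivAt_mul_sub_rpow_neg {A c p t : ℝ} (ht : t < c) :
    HasDerivAt (fun t => A * (c - t) ^ (-p)) (A * p * (c - t) ^ (-(p + 1))) t := by
  refine (((Real.hasDerivAt_rpow_const (p := -p) (Or.inl (sub_pos.2 ht).ne')).comp t
    ((hasDerivAt_id t).const_sub c)).const_mul A).congr_deriv ?_
  rw [neg_add']
  ring

section Barrier
variable {n : ℕ}

noncomputable def barrier (z : EuclideanSpace ℝ (Fin n)) (r A p : ℝ)
    (y : EuclideanSpace ℝ (Fin n)) : ℝ :=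
  A * (r ^ 2 - ‖y - z‖ ^ 2) ^ (-p)

variable {z x : EuclideanSpace ℝ (Fin n)} {r A p : ℝ}

theorem barrier_self : barrier z r A p z = A * (r ^ 2) ^ (-p) := by
  simp [barrier]

theorem barrier_pos (hA : 0 < A) (hx : x ∈ ball z r) : 0 < barrier z r A p x := by
  rw [mem_ball, dist_eq_norm] at hx
  have : ‖x - z‖ ^ 2 < r ^ 2 := by gcongr
  exact mul_pos hA (Real.rpow_pos_of_pos (sub_pos.2 this) _)

theorem contDiffOn_barrier : ContDiffOn ℝ 2 (barrier z r A p) (ball z r) := by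
  intro x hx
  rw [mem_ball, dist_eq_norm] at hx
  have : ‖x - z‖ ^ 2 < r ^ 2 := by gcongr
  refine (contDiffAt_const.mul ?_).contDiffWithinAt
  exact (contDiff_const.sub ((contDiff_id.sub contDiff_const).norm_sq ℝ)).contDiffAt.rpow_const_of_ne
    (sub_pos.2 this).ne'

theorem lap_barrier (hx : x ∈ ball z r) :
    lap (barrier z r A p) x =
      4 * (A * p * (p + 1) * (r ^ 2 - ‖x - z‖ ^ 2) ^ (-(p + 1 + 1))) * ‖x - z‖ ^ 2 +
        2 * n * (A * p * (r ^ 2 - ‖x - z‖ ^ 2) ^ (-(p + 1))) := by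
  rw [mem_ball, dist_eq_norm] at hx
  have hs : ‖x - z‖ ^ 2 < r ^ 2 := by gcongr
  exact lap_comp_norm_sub_sq
    (Filter.eventually_of_mem (Iio_mem_nhds hs) fun t ht => hasDerivAt_mul_sub_rpow_neg ht)
    (hasDerivAt_mul_sub_rpow_neg hs)

theorem lap_barrier_le_rpow {q : ℝ} (hp : 0 < p) (hpq : p * (q - 1) = 2) (hA : 0 < A)
    (hAK : (4 * p * (p + 1) + 2 * n * p) * r ^ 2 ≤ A ^ (q - 1)) (hx : x ∈ ball z r) :
    lap (barrier z r A p) x ≤ barrier z r A p x ^ q := by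
  rw [lap_barrier hx]
  have hxr : ‖x - z‖ < r := by rwa [mem_ball, dist_eq_norm] at hx
  have hsr : ‖x - z‖ ^ 2 < r ^ 2 := by gcongr
  set s := ‖x - z‖ ^ 2
  have hs : 0 ≤ s := by positivity
  set b := r ^ 2 - s
  have hb : 0 < b := sub_pos.2 hsr
  set B := b ^ (-(p + 1 + 1))
  have hB : 0 < B := Real.rpow_pos_of_pos hb _
  have hbB : b ^ (-(p + 1)) = B * b := by
    rw [show -(p + 1) = -(p + 1 + 1) + 1 by ring, Real.rpow_add hb, Real.rpow_one]
  have hq : 0 < q - 1 := pos_of_mul_pos_right (hpq ▸ two_pos) hp.le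
  have hAq : A ^ q = A * A ^ (q - 1) := by
    rw [← Real.rpow_one_add' hA.le (by linarith)]
    ring_nf
  have hpow : barrier z r A p x ^ q = A * A ^ (q - 1) * B := by
    rw [barrier, Real.mul_rpow hA.le (Real.rpow_nonneg hb.le _), ← Real.rpow_mul hb.le,
      show -p * q = -(p + 1 + 1) by linarith, hAq]
  have hn : (0 : ℝ) ≤ n := n.cast_nonneg
  calc 4 * (A * p * (p + 1) * B) * s + 2 * n * (A * p * b ^ (-(p + 1)))
      = A * p * B * (4 * (p + 1) * s + 2 * n * b) := by rw [hbB]; ring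
    _ ≤ A * p * B * ((4 * (p + 1) + 2 * n) * r ^ 2) :=
        mul_le_mul_of_nonneg_left (by nlinarith) (by positivity)
    _ = A * B * ((4 * p * (p + 1) + 2 * n * p) * r ^ 2) := by ring
    _ ≤ A * B * A ^ (q - 1) := by gcongr
    _ = barrier z r A p x ^ q := by rw [hpow]; ring

theorem exists_lt_forall_barrier_le (hr : 0 < r) (hA : 0 < A) (hp : 0 < p) (M : ℝ) :
    ∃ ρ < r, ∀ y ∈ ball z r, barrier z r A p y ≤ M → y ∈ closedBall z ρ := by
  have hgap : Tendsto (fun t => r ^ 2 - t ^ 2) (𝓝[<] r) (𝓝[>] 0) := by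
    refine tendsto_nhdsWithin_iff.2 ⟨?_, ?_⟩
    · have h : Tendsto (fun t => r ^ 2 - t ^ 2) (𝓝 r) (𝓝 (r ^ 2 - r ^ 2)) :=
        (continuous_const.sub (continuous_pow 2)).tendsto r
      simpa using h.mono_left nhdsWithin_le_nhds
    · filter_upwards [Ioo_mem_nhdsLT hr] with t ht
      exact mem_Ioi.2 (by nlinarith [ht.1, ht.2])
  have hlim : Tendsto (fun t => A * (r ^ 2 - t ^ 2) ^ (-p)) (𝓝[<] r) atTop :=
    ((tendsto_rpow_neg_nhdsGT_zero (neg_neg_of_pos hp)).comp hgap).const_mul_atTop hA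
  obtain ⟨ρ, hρ, hsub⟩ := mem_nhdsLT_iff_exists_Ioo_subset.1 (hlim.eventually_gt_atTop M)
  refine ⟨ρ, hρ, fun y hy hM => ?_⟩
  rw [mem_ball, dist_eq_norm] at hy
  rw [mem_closedBall, dist_eq_norm]
  by_contra! hlt
  exact (hsub ⟨hlt, hy⟩).not_ge hM

theorem le_div_rpow_of_rpow_le_lap {u : EuclideanSpace ℝ (Fin n) → ℝ} {q : ℝ} (hp : 0 < p)
    (hpq : p * (q - 1) = 2) (hr : 0 < r) (hu : ContDiffOn ℝ 2 u (ball x r))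
    (hcont : ContinuousOn u (closedBall x r)) (hlap : ∀ y ∈ ball x r, u y ^ q ≤ lap u y) :
    u x ≤ (4 * p * (p + 1) + 2 * n * p) ^ (p / 2) / r ^ p := by
  set K := 4 * p * (p + 1) + 2 * n * p
  have hK : 0 < K := by positivity
  set A := (K * r ^ 2) ^ (p / 2)
  have hA : 0 < A := by positivity
  have hAK : K * r ^ 2 ≤ A ^ (q - 1) := by
    rw [← Real.rpow_mul (by positivity), show p / 2 * (q - 1) = 1 by linarith, Real.rpow_one]
  obtain ⟨M, hM⟩ := (isCompact_closedBall x r).bddAbove_image hcont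
  obtain ⟨ρ, hρr, hρ⟩ := exists_lt_forall_barrier_le (z := x) hr hA hp M
  have hq : 0 < q := by nlinarith
  calc u x ≤ barrier x r A p x :=
        le_of_rpow_le_lap_of_lap_le_rpow hq isOpen_ball (isCompact_closedBall x ρ)
          (closedBall_subset_ball hρr) hu contDiffOn_barrier (fun y hy => (barrier_pos hA hy).le)
          hlap (fun y hy => lap_barrier_le_rpow hp hpq hA hAK hy)
          (fun y hy hlt => hρ y hy (hlt.le.trans (hM ⟨y, ball_subset_closedBall hy, rfl⟩)))
          (mem_ball_self hr)
    _ = K ^ (p / 2) / r ^ p := by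
        rw [barrier_self, show A = (K * r ^ 2) ^ (p / 2) from rfl,
          Real.mul_rpow hK.le (by positivity), ← Real.rpow_natCast r 2, ← Real.rpow_mul hr.le,
          ← Real.rpow_mul hr.le, mul_assoc, ← Real.rpow_add hr,
          show ((2 : ℕ) : ℝ) * (p / 2) + (2 : ℕ) * -p = -p by push_cast; ring,
          Real.rpow_neg hr.le, ← div_eq_mul_inv]

end Barrier

/-- **Keller–Osserman bound**: there is a dimensional constant `C > 0` such that every
positive `C²` solution of `Δu = u^{(n+2)/(n-2)}` on a proper open set `O ⊆ ℝⁿ` satisfies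
`u(x) ≤ C · dist(x, Oᶜ)^{-(n-2)/2}`. -/
theorem statement2 (n : ℕ) (hn : 3 ≤ n) :
    ∃ C : ℝ, 0 < C ∧
      ∀ O : Set (EuclideanSpace ℝ (Fin n)), IsOpen O → O ≠ univ →
      ∀ u : EuclideanSpace ℝ (Fin n) → ℝ,
        ContDiffOn ℝ 2 u O → (∀ x ∈ O, 0 < u x) →
        (∀ x ∈ O, lap u x = u x ^ (((n:ℝ) + 2) / ((n:ℝ) - 2))) →
        ∀ x ∈ O, u x ≤ C / infDist x Oᶜ ^ (((n:ℝ) - 2) / 2) := by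
  have hn' : (3 : ℝ) ≤ n := by exact_mod_cast hn
  set p : ℝ := (n - 2) / 2
  have hp : 0 < p := by simp only [p]; linarith
  have hpq : p * ((n + 2) / (n - 2) - 1) = 2 := by
    field_simp [show (n : ℝ) - 2 ≠ 0 by linarith]
    ring
  refine ⟨(4 * p * (p + 1) + 2 * n * p) ^ (p / 2) * 2 ^ p, by positivity, ?_⟩
  intro O hO hne u hu _ hlap x hx
  have hR : 0 < infDist x Oᶜ :=
    (hO.isClosed_compl.notMem_iff_infDist_pos (nonempty_compl.2 hne)).1 (not_not.2 hx)
  have hball : closedBall x (infDist x Oᶜ / 2) ⊆ O :=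
    (closedBall_subset_ball (half_lt_self hR)).trans ball_infDist_compl_subset
  have hballO := ball_subset_closedBall.trans hball
  calc u x ≤ (4 * p * (p + 1) + 2 * n * p) ^ (p / 2) / (infDist x Oᶜ / 2) ^ p :=
        le_div_rpow_of_rpow_le_lap hp hpq (half_pos hR) (hu.mono hballO)
          (hu.continuousOn.mono hball) fun y hy => (hlap y (hballO hy)).ge
    _ = _ := by rw [Real.div_rpow hR.le zero_le_two]; field_simp
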